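/- arXiv:1910.08251 — 4 statements merged into one kernel-verified Lean document; each statement's English description precedes it below -/
import Mathlib

section
/- A certificate of infeasibility certifies primal infeasibility: if a tuple of multipliers is dual feasible with ρ_t = 0 for all t = 0,…,T and σ_t = 0 for all t = 0,…,T−1, and its dual objective d for the data (x̄, (v̲_t), (v̄_t)) is strictly positive, then no trajectory is primal feasible for (x̄, (v̲_t), (v̄_t)). -/
open Matrix

/-- The squared Euclidean norm `|v|²` of a vector in `ℝ^k`. -/
noncomputable def sqNorm {k : ℕ} (v : Fin k → ℝ) : ℝ := ∑ i, v i ^ 2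

variable {n p q r c m : ℕ}

/-- Primal feasibility of a trajectory `((x_t)_{t=0}^T, (u_t)_{t=0}^{T-1})` for the data
`(x̄, (v̲_t), (v̄_t))` of the QP relaxation of the hybrid MPC problem. -/
def PrimalFeasible (T : ℕ)
    (A : Matrix (Fin n) (Fin n) ℝ) (B : Matrix (Fin n) (Fin p) ℝ)
    (F : Matrix (Fin c) (Fin n) ℝ) (G : Matrix (Fin c) (Fin p) ℝ)
    (V : Matrix (Fin m) (Fin p) ℝ) (h : Fin c → ℝ)
    (xbar : Fin n → ℝ) (vlo vhi : ℕ → Fin m → ℝ)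
    (x : ℕ → Fin n → ℝ) (u : ℕ → Fin p → ℝ) : Prop :=
  x 0 = xbar ∧
  (∀ t < T, x (t + 1) = A *ᵥ x t + B *ᵥ u t) ∧
  (∀ t < T, ∀ i, (F *ᵥ x t + G *ᵥ u t) i ≤ h i) ∧
  (∀ t < T, ∀ i, vlo t i ≤ (V *ᵥ u t) i ∧ (V *ᵥ u t) i ≤ vhi t i)

/-- Cost `Σ_{t=0}^T |Q x_t|² + Σ_{t=0}^{T-1} |R u_t|²` of a trajectory. -/
noncomputable def trajCost (T : ℕ) (Q : Matrix (Fin q) (Fin n) ℝ) (R : Matrix (Fin r) (Fin p) ℝ)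
    (x : ℕ → Fin n → ℝ) (u : ℕ → Fin p → ℝ) : ℝ :=
  ∑ t ∈ Finset.range (T + 1), sqNorm (Q *ᵥ x t) + ∑ t ∈ Finset.range T, sqNorm (R *ᵥ u t)

/-- Dual feasibility of a tuple of multipliers
`((λ_t, ρ_t)_{t=0}^T, (μ_t, ν̲_t, ν̄_t, σ_t)_{t=0}^{T-1})`.
Note that dual feasibility does not depend on the bound sequences `(v̲_t), (v̄_t)`
nor on the initial state `x̄`. -/
def DualFeasible (T : ℕ)
    (A : Matrix (Fin n) (Fin n) ℝ) (B : Matrix (Fin n) (Fin p) ℝ)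
    (Q : Matrix (Fin q) (Fin n) ℝ) (R : Matrix (Fin r) (Fin p) ℝ)
    (F : Matrix (Fin c) (Fin n) ℝ) (G : Matrix (Fin c) (Fin p) ℝ)
    (V : Matrix (Fin m) (Fin p) ℝ)
    (lam : ℕ → Fin n → ℝ) (rho : ℕ → Fin q → ℝ)
    (mu : ℕ → Fin c → ℝ) (nlo nhi : ℕ → Fin m → ℝ) (sig : ℕ → Fin r → ℝ) : Prop :=
  (∀ t < T, Qᵀ *ᵥ rho t + lam t - Aᵀ *ᵥ lam (t + 1) + Fᵀ *ᵥ mu t = 0) ∧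
  Qᵀ *ᵥ rho T + lam T = 0 ∧
  (∀ t < T, Rᵀ *ᵥ sig t - Bᵀ *ᵥ lam (t + 1) + Gᵀ *ᵥ mu t + Vᵀ *ᵥ (nhi t - nlo t) = 0) ∧
  (∀ t < T, ∀ i, 0 ≤ mu t i) ∧ (∀ t < T, ∀ i, 0 ≤ nlo t i) ∧ (∀ t < T, ∀ i, 0 ≤ nhi t i)

/-- The dual objective
`d := −Σ_{t=0}^T |ρ_t/2|² − Σ_{t=0}^{T−1}(|σ_t/2|² + hᵀμ_t + v̄_tᵀν̄_t − v̲_tᵀν̲_t) − x̄ᵀλ_0`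
for the data `(x̄, (v̲_t), (v̄_t))`. -/
noncomputable def dualObj (T : ℕ) (h : Fin c → ℝ) (xbar : Fin n → ℝ) (vlo vhi : ℕ → Fin m → ℝ)
    (lam : ℕ → Fin n → ℝ) (rho : ℕ → Fin q → ℝ)
    (mu : ℕ → Fin c → ℝ) (nlo nhi : ℕ → Fin m → ℝ) (sig : ℕ → Fin r → ℝ) : ℝ :=
  -(∑ t ∈ Finset.range (T + 1), sqNorm (fun i => rho t i / 2))
    - ∑ t ∈ Finset.range T,
        (sqNorm (fun i => sig t i / 2) + h ⬝ᵥ mu t + vhi t ⬝ᵥ nhi t - vlo t ⬝ᵥ nlo t)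
    - xbar ⬝ᵥ lam 0

/-! With `ρ = 0` and `σ = 0` the dual constraints say that `λ` is an adjoint trajectory:
`λ_t = Aᵀλ_{t+1} − Fᵀμ_t`, `λ_T = 0` and `Bᵀλ_{t+1} = Gᵀμ_t + Vᵀ(ν̄_t − ν̲_t)`. Along a feasible
trajectory, `x_tᵀλ_t − x_{t+1}ᵀλ_{t+1}` is then the negated multiplier pairing with the constraint
values, so telescoping expresses `x̄ᵀλ_0` through them and `d` becomes a sum of products of
nonnegative multipliers with nonpositive constraint slacks. Hence `d ≤ 0` for feasible data. -/

theorem costate_pairing_step {α ι κ γ ε : Type*} [CommRing α]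
    [Fintype ι] [Fintype κ] [Fintype γ] [Fintype ε]
    (A : Matrix ι ι α) (B : Matrix ι κ α) (F : Matrix γ ι α) (G : Matrix γ κ α)
    (V : Matrix ε κ α) {x l l' : ι → α} {u : κ → α} {μ : γ → α} {ν : ε → α}
    (hl : l = Aᵀ *ᵥ l' - Fᵀ *ᵥ μ) (hl' : Bᵀ *ᵥ l' = Gᵀ *ᵥ μ + Vᵀ *ᵥ ν) :
    x ⬝ᵥ l - (A *ᵥ x + B *ᵥ u) ⬝ᵥ l' = -(μ ⬝ᵥ (F *ᵥ x + G *ᵥ u)) - ν ⬝ᵥ (V *ᵥ u) := by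
  have hx : x ⬝ᵥ l = l' ⬝ᵥ (A *ᵥ x) - μ ⬝ᵥ (F *ᵥ x) := by
    rw [hl, dotProduct_sub, dotProduct_transpose_mulVec, dotProduct_transpose_mulVec]
  have hu : (B *ᵥ u) ⬝ᵥ l' = μ ⬝ᵥ (G *ᵥ u) + ν ⬝ᵥ (V *ᵥ u) := by
    rw [dotProduct_comm, ← dotProduct_transpose_mulVec, hl', dotProduct_add,
      dotProduct_transpose_mulVec, dotProduct_transpose_mulVec]
  rw [hx, add_dotProduct, hu, dotProduct_add, dotProduct_comm (A *ᵥ x)]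
  ring

section Duality

variable {T : ℕ} {A : Matrix (Fin n) (Fin n) ℝ} {B : Matrix (Fin n) (Fin p) ℝ}
  {Q : Matrix (Fin q) (Fin n) ℝ} {R : Matrix (Fin r) (Fin p) ℝ}
  {F : Matrix (Fin c) (Fin n) ℝ} {G : Matrix (Fin c) (Fin p) ℝ} {V : Matrix (Fin m) (Fin p) ℝ}
  {h : Fin c → ℝ} {xbar : Fin n → ℝ} {vlo vhi : ℕ → Fin m → ℝ}
  {lam : ℕ → Fin n → ℝ} {rho : ℕ → Fin q → ℝ} {mu : ℕ → Fin c → ℝ} {nlo nhi : ℕ → Fin m → ℝ}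
  {sig : ℕ → Fin r → ℝ} {x : ℕ → Fin n → ℝ} {u : ℕ → Fin p → ℝ}

theorem DualFeasible.costate_eq
    (hdual : DualFeasible T A B Q R F G V lam rho mu nlo nhi sig)
    (hrho : ∀ t ≤ T, rho t = 0) {t : ℕ} (ht : t < T) :
    lam t = Aᵀ *ᵥ lam (t + 1) - Fᵀ *ᵥ mu t := by
  have hd := hdual.1 t ht
  rw [hrho t ht.le, mulVec_zero, zero_add] at hd
  linear_combination hd

theorem DualFeasible.costate_terminal
    (hdual : DualFeasible T A B Q R F G V lam rho mu nlo nhi sig)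
    (hrho : ∀ t ≤ T, rho t = 0) : lam T = 0 := by
  simpa [hrho T le_rfl] using hdual.2.1

theorem DualFeasible.input_eq
    (hdual : DualFeasible T A B Q R F G V lam rho mu nlo nhi sig)
    (hsig : ∀ t < T, sig t = 0) {t : ℕ} (ht : t < T) :
    Bᵀ *ᵥ lam (t + 1) = Gᵀ *ᵥ mu t + Vᵀ *ᵥ (nhi t - nlo t) := by
  have hd := hdual.2.2.1 t ht
  rw [hsig t ht, mulVec_zero, zero_sub] at hd
  linear_combination -hd

theorem dualObj_eq_of_rho_sig_eq_zero (hrho : ∀ t ≤ T, rho t = 0) (hsig : ∀ t < T, sig t = 0) :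
    dualObj T h xbar vlo vhi lam rho mu nlo nhi sig =
      -∑ t ∈ Finset.range T, (h ⬝ᵥ mu t + vhi t ⬝ᵥ nhi t - vlo t ⬝ᵥ nlo t) - xbar ⬝ᵥ lam 0 := by
  have hr : ∀ t ∈ Finset.range (T + 1), sqNorm (fun i => rho t i / 2) = 0 := fun t ht => by
    simp [hrho t (Finset.mem_range_succ_iff.mp ht), sqNorm]
  have hs : ∀ t ∈ Finset.range T, sqNorm (fun i => sig t i / 2) = 0 := fun t ht => by
    simp [hsig t (Finset.mem_range.mp ht), sqNorm]
  simp only [dualObj, Finset.sum_eq_zero hr, neg_zero, zero_sub]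
  congr 2
  refine Finset.sum_congr rfl fun t ht => ?_
  rw [hs t ht, zero_add]

theorem PrimalFeasible.dotProduct_lam_zero_eq_sum
    (hprim : PrimalFeasible T A B F G V h xbar vlo vhi x u)
    (hdual : DualFeasible T A B Q R F G V lam rho mu nlo nhi sig)
    (hrho : ∀ t ≤ T, rho t = 0) (hsig : ∀ t < T, sig t = 0) :
    xbar ⬝ᵥ lam 0 = ∑ t ∈ Finset.range T,
      (-(mu t ⬝ᵥ (F *ᵥ x t + G *ᵥ u t)) - (nhi t - nlo t) ⬝ᵥ (V *ᵥ u t)) := by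
  obtain ⟨hx0, hdyn, -, -⟩ := hprim
  calc xbar ⬝ᵥ lam 0 = x 0 ⬝ᵥ lam 0 - x T ⬝ᵥ lam T := by
        rw [hx0, hdual.costate_terminal hrho, dotProduct_zero, sub_zero]
    _ = ∑ t ∈ Finset.range T, (x t ⬝ᵥ lam t - x (t + 1) ⬝ᵥ lam (t + 1)) :=
        (Finset.sum_range_sub' (fun t => x t ⬝ᵥ lam t) T).symm
    _ = _ := Finset.sum_congr rfl fun t ht => by
        have ht := Finset.mem_range.mp ht
        rw [hdyn t ht]
        exact costate_pairing_step A B F G V (hdual.costate_eq hrho ht) (hdual.input_eq hsig ht)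

theorem dualObj_nonpos_of_primalFeasible
    (hprim : PrimalFeasible T A B F G V h xbar vlo vhi x u)
    (hdual : DualFeasible T A B Q R F G V lam rho mu nlo nhi sig)
    (hrho : ∀ t ≤ T, rho t = 0) (hsig : ∀ t < T, sig t = 0) :
    dualObj T h xbar vlo vhi lam rho mu nlo nhi sig ≤ 0 := by
  rw [dualObj_eq_of_rho_sig_eq_zero hrho hsig, hprim.dotProduct_lam_zero_eq_sum hdual hrho hsig,
    ← Finset.sum_neg_distrib, ← Finset.sum_sub_distrib]
  refine Finset.sum_nonpos fun t ht => ?_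
  have ht := Finset.mem_range.mp ht
  obtain ⟨-, -, hineq, hbox⟩ := hprim
  obtain ⟨-, -, -, hmu, hnlo, hnhi⟩ := hdual
  have hF : mu t ⬝ᵥ (F *ᵥ x t + G *ᵥ u t) ≤ mu t ⬝ᵥ h :=
    dotProduct_le_dotProduct_of_nonneg_left (hineq t ht) (hmu t ht)
  have hhi : nhi t ⬝ᵥ (V *ᵥ u t) ≤ nhi t ⬝ᵥ vhi t :=
    dotProduct_le_dotProduct_of_nonneg_left (fun i => (hbox t ht i).2) (hnhi t ht)
  have hlo : nlo t ⬝ᵥ vlo t ≤ nlo t ⬝ᵥ (V *ᵥ u t) :=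
    dotProduct_le_dotProduct_of_nonneg_left (fun i => (hbox t ht i).1) (hnlo t ht)
  rw [sub_dotProduct, dotProduct_comm h, dotProduct_comm (vhi t), dotProduct_comm (vlo t)]
  linarith

end Duality

theorem certificate_of_infeasibility_general (n p q r c m T : ℕ)
    (A : Matrix (Fin n) (Fin n) ℝ) (B : Matrix (Fin n) (Fin p) ℝ)
    (Q : Matrix (Fin q) (Fin n) ℝ) (R : Matrix (Fin r) (Fin p) ℝ)
    (F : Matrix (Fin c) (Fin n) ℝ) (G : Matrix (Fin c) (Fin p) ℝ)
    (V : Matrix (Fin m) (Fin p) ℝ) (h : Fin c → ℝ)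
    (xbar : Fin n → ℝ) (vlo vhi : ℕ → Fin m → ℝ)
    (lam : ℕ → Fin n → ℝ) (rho : ℕ → Fin q → ℝ)
    (mu : ℕ → Fin c → ℝ) (nlo nhi : ℕ → Fin m → ℝ) (sig : ℕ → Fin r → ℝ)
    (hdual : DualFeasible T A B Q R F G V lam rho mu nlo nhi sig)
    (hrho : ∀ t ≤ T, rho t = 0) (hsig : ∀ t < T, sig t = 0)
    (hpos : 0 < dualObj T h xbar vlo vhi lam rho mu nlo nhi sig) :
    ¬ ∃ (x : ℕ → Fin n → ℝ) (u : ℕ → Fin p → ℝ),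
        PrimalFeasible T A B F G V h xbar vlo vhi x u := by
  rintro ⟨x, u, hprim⟩
  exact hpos.not_ge (dualObj_nonpos_of_primalFeasible hprim hdual hrho hsig)

/-- A **certificate of infeasibility** certifies primal infeasibility: a dual-feasible
tuple with `ρ_t = 0` and `σ_t = 0` everywhere and strictly positive dual objective for
the data `(x̄, (v̲_t), (v̄_t))` shows that no trajectory is primal feasible for that data. -/
theorem certificate_of_infeasibility (n p q r c m T : ℕ) (hT : 1 ≤ T)
    (A : Matrix (Fin n) (Fin n) ℝ) (B : Matrix (Fin n) (Fin p) ℝ)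
    (Q : Matrix (Fin q) (Fin n) ℝ) (R : Matrix (Fin r) (Fin p) ℝ)
    (F : Matrix (Fin c) (Fin n) ℝ) (G : Matrix (Fin c) (Fin p) ℝ)
    (V : Matrix (Fin m) (Fin p) ℝ) (h : Fin c → ℝ)
    (xbar : Fin n → ℝ) (vlo vhi : ℕ → Fin m → ℝ)
    (lam : ℕ → Fin n → ℝ) (rho : ℕ → Fin q → ℝ)
    (mu : ℕ → Fin c → ℝ) (nlo nhi : ℕ → Fin m → ℝ) (sig : ℕ → Fin r → ℝ)
    (hdual : DualFeasible T A B Q R F G V lam rho mu nlo nhi sig)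
    (hrho : ∀ t ≤ T, rho t = 0) (hsig : ∀ t < T, sig t = 0)
    (hpos : 0 < dualObj T h xbar vlo vhi lam rho mu nlo nhi sig) :
    ¬ ∃ (x : ℕ → Fin n → ℝ) (u : ℕ → Fin p → ℝ),
        PrimalFeasible T A B F G V h xbar vlo vhi x u :=
  certificate_of_infeasibility_general n p q r c m T A B Q R F G V h xbar vlo vhi lam rho mu nlo nhi
    sig hdual hrho hsig hpos
end

section
/- Validity of the shifted initial cover (Proposition of Section IV): let 𝒮 be a finite collection of pairs (v̲, v̄) of vectors in ℝ^{Tm} with all entries in {0,1} and v̲ ≤ v̄ componentwise, such that the boxes [v̲, v̄] := {z ∈ ℝ^{Tm} : v̲ ≤ z ≤ v̄} are pairwise disjoint and their union contains {0,1}^{Tm}. Fix v₀ ∈ {0,1}^m and view ℝ^{Tm} as T consecutive blocks of ℝ^m, writing v̲ = (v̲⁰,…,v̲^{T−1}) and v̄ = (v̄⁰,…,v̄^{T−1}). Let 𝒮' be the collection of shifted pairs ((v̲¹,…,v̲^{T−1}, 0), (v̄¹,…,v̄^{T−1}, 1)) over all (v̲, v̄) ∈ 𝒮 with v̲⁰ ≤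 v₀ ≤ v̄⁰, where 0 and 1 denote the all-zeros and all-ones vectors of ℝ^m. Then the union of the boxes of 𝒮' contains {0,1}^{Tm}, and for any two retained members of 𝒮 whose shifted boxes have a common point, the two members coincide (i.e., the boxes of 𝒮' are pairwise disjoint). -/
/-- Membership of `z ∈ ℝ^{Tm}` (viewed as `T` blocks of `ℝ^m`) in the box `[v̲, v̄]`. -/
def InBox {T m : ℕ} (vlo vhi z : Fin T → Fin m → ℝ) : Prop :=
  ∀ t i, vlo t i ≤ z t i ∧ z t i ≤ vhi t i

/-- Shift of a lower bound one step backwards in time, appending the all-zeros block. -/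
noncomputable def shiftLo {T m : ℕ} (vlo : Fin T → Fin m → ℝ) : Fin T → Fin m → ℝ :=
  fun t => if ht : (t : ℕ) + 1 < T then vlo ⟨(t : ℕ) + 1, ht⟩ else fun _ => 0

/-- Shift of an upper bound one step backwards in time, appending the all-ones block. -/
noncomputable def shiftHi {T m : ℕ} (vhi : Fin T → Fin m → ℝ) : Fin T → Fin m → ℝ :=
  fun t => if ht : (t : ℕ) + 1 < T then vhi ⟨(t : ℕ) + 1, ht⟩ else fun _ => 1

/-!
Prepending `v₀` to `z` and dropping the last block of `z` undoes the shift: for `z` in the unit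
cube, `z` lies in the shifted box of a member `(v̲, v̄)` with `v̲⁰ ≤ v₀ ≤ v̄⁰` exactly when
`(v₀, z⁰, …, z^{T-2})` lies in `[v̲, v̄]`, and the backward implication holds for every `z`.
Covering and disjointness of the shifted boxes are thus inherited from those of the original ones.
-/

def prependBlock {β : Type*} {T : ℕ} (v0 : β) (z : Fin T → β) : Fin T → β :=
  fun t => if h : (t : ℕ) = 0 then v0 else z ⟨(t : ℕ) - 1, by omega⟩

theorem prependBlock_mem {β : Type*} {T : ℕ} {s : Set β} {v0 : β} {z : Fin T → β}
    (h0 : v0 ∈ s) (hz : ∀ t, z t ∈ s) (t : Fin T) : prependBlock v0 z t ∈ s := by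
  unfold prependBlock
  split_ifs
  exacts [h0, hz _]

section ShiftedBox

variable {T m : ℕ} {vlo vhi z : Fin T → Fin m → ℝ} {v0 : Fin m → ℝ}

theorem inBox_prependBlock (hT : 0 < T)
    (h0 : ∀ i, vlo ⟨0, hT⟩ i ≤ v0 i ∧ v0 i ≤ vhi ⟨0, hT⟩ i)
    (hz : InBox (shiftLo vlo) (shiftHi vhi) z) :
    InBox vlo vhi (prependBlock v0 z) := by
  rintro ⟨_ | t, ht⟩ i
  · simpa [prependBlock] using h0 i
  · simpa [shiftLo, shiftHi, ht, prependBlock] using hz ⟨t, by omega⟩ i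

theorem inBox_shift_of_inBox_prependBlock (hT : 0 < T)
    (hz : ∀ t i, 0 ≤ z t i ∧ z t i ≤ 1) (h : InBox vlo vhi (prependBlock v0 z)) :
    (∀ i, vlo ⟨0, hT⟩ i ≤ v0 i ∧ v0 i ≤ vhi ⟨0, hT⟩ i) ∧
      InBox (shiftLo vlo) (shiftHi vhi) z := by
  refine ⟨fun i => by simpa [prependBlock] using h ⟨0, hT⟩ i, fun t i => ?_⟩
  by_cases ht : (t : ℕ) + 1 < T
  · simpa [shiftLo, shiftHi, ht, prependBlock] using h ⟨(t : ℕ) + 1, ht⟩ i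
  · simpa [shiftLo, shiftHi, ht] using hz t i

end ShiftedBox

theorem shifted_cover_valid_general (T m : ℕ) (hT : 0 < T)
    (S : Finset ((Fin T → Fin m → ℝ) × (Fin T → Fin m → ℝ)))
    (hdisj : ∀ s₁ ∈ S, ∀ s₂ ∈ S, s₁ ≠ s₂ →
      ∀ z : Fin T → Fin m → ℝ, ¬ (InBox s₁.1 s₁.2 z ∧ InBox s₂.1 s₂.2 z))
    (hcover : ∀ z : Fin T → Fin m → ℝ, (∀ t i, z t i = 0 ∨ z t i = 1) →
      ∃ s ∈ S, InBox s.1 s.2 z)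
    (v0 : Fin m → ℝ) (hv0 : ∀ i, v0 i = 0 ∨ v0 i = 1) :
    (∀ z : Fin T → Fin m → ℝ, (∀ t i, z t i = 0 ∨ z t i = 1) →
      ∃ s ∈ S, (∀ i, s.1 ⟨0, hT⟩ i ≤ v0 i ∧ v0 i ≤ s.2 ⟨0, hT⟩ i) ∧
        InBox (shiftLo s.1) (shiftHi s.2) z)
    ∧ (∀ s₁ ∈ S, ∀ s₂ ∈ S,
        (∀ i, s₁.1 ⟨0, hT⟩ i ≤ v0 i ∧ v0 i ≤ s₁.2 ⟨0, hT⟩ i) →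
        (∀ i, s₂.1 ⟨0, hT⟩ i ≤ v0 i ∧ v0 i ≤ s₂.2 ⟨0, hT⟩ i) →
        (∃ z : Fin T → Fin m → ℝ,
          InBox (shiftLo s₁.1) (shiftHi s₁.2) z ∧ InBox (shiftLo s₂.1) (shiftHi s₂.2) z) →
        s₁ = s₂) := by
  refine ⟨fun z hz => ?_, fun s₁ h₁ s₂ h₂ hret₁ hret₂ ⟨z, hz₁, hz₂⟩ => ?_⟩
  · obtain ⟨s, hs, hbox⟩ := hcover (prependBlock v0 z)
      (prependBlock_mem (s := {w : Fin m → ℝ | ∀ i, w i = 0 ∨ w i = 1}) hv0 hz)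
    have hunit : ∀ t i, 0 ≤ z t i ∧ z t i ≤ 1 := fun t i => by
      rcases hz t i with h | h <;> simp [h]
    exact ⟨s, hs, inBox_shift_of_inBox_prependBlock hT hunit hbox⟩
  · by_contra hne
    exact hdisj s₁ h₁ s₂ h₂ hne (prependBlock v0 z)
      ⟨inBox_prependBlock hT hret₁ hz₁, inBox_prependBlock hT hret₂ hz₂⟩

/-- **Validity of the shifted initial cover:** if the boxes of a finite collection `S` of
binary pairs `(v̲, v̄)` are pairwise disjoint and cover `{0,1}^{Tm}`, then the shifted
boxes of the members retained by the binary action `v₀` (those with `v̲⁰ ≤ v₀ ≤ v̄⁰`)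
cover `{0,1}^{Tm}`, and any two retained members whose shifted boxes share a point
coincide. -/
theorem shifted_cover_valid (T m : ℕ) (hT : 0 < T) (hm : 0 < m)
    (S : Finset ((Fin T → Fin m → ℝ) × (Fin T → Fin m → ℝ)))
    (hbin : ∀ s ∈ S, (∀ t i, s.1 t i = 0 ∨ s.1 t i = 1) ∧
      (∀ t i, s.2 t i = 0 ∨ s.2 t i = 1) ∧ (∀ t i, s.1 t i ≤ s.2 t i))
    (hdisj : ∀ s₁ ∈ S, ∀ s₂ ∈ S, s₁ ≠ s₂ →
      ∀ z : Fin T → Fin m → ℝ, ¬ (InBox s₁.1 s₁.2 z ∧ InBox s₂.1 s₂.2 z))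
    (hcover : ∀ z : Fin T → Fin m → ℝ, (∀ t i, z t i = 0 ∨ z t i = 1) →
      ∃ s ∈ S, InBox s.1 s.2 z)
    (v0 : Fin m → ℝ) (hv0 : ∀ i, v0 i = 0 ∨ v0 i = 1) :
    (∀ z : Fin T → Fin m → ℝ, (∀ t i, z t i = 0 ∨ z t i = 1) →
      ∃ s ∈ S, (∀ i, s.1 ⟨0, hT⟩ i ≤ v0 i ∧ v0 i ≤ s.2 ⟨0, hT⟩ i) ∧
        InBox (shiftLo s.1) (shiftHi s.2) z)
    ∧ (∀ s₁ ∈ S, ∀ s₂ ∈ S,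
        (∀ i, s₁.1 ⟨0, hT⟩ i ≤ v0 i ∧ v0 i ≤ s₁.2 ⟨0, hT⟩ i) →
        (∀ i, s₂.1 ⟨0, hT⟩ i ≤ v0 i ∧ v0 i ≤ s₂.2 ⟨0, hT⟩ i) →
        (∃ z : Fin T → Fin m → ℝ,
          InBox (shiftLo s₁.1) (shiftHi s₁.2) z ∧ InBox (shiftLo s₂.1) (shiftHi s₂.2) z) →
        s₁ = s₂) :=
  shifted_cover_valid_general T m hT S hdisj hcover v0 hv0
end

section
/- Proposition (nonnegativity of π₇ under constraint-set growth): for s = 0,…,T−1 let 𝒟_s := {(x, u) ∈ ℝ^n × ℝ^p : F_s x + G_s u ≤ h_s} be nonempty. For t = 0,…,T−2 let M_t ∈ ℝ^{c_t×c_{t+1}} have nonnegative entries with F_tᵀM_t = F_{t+1}ᵀ and G_tᵀM_t = G_{t+1}ᵀ, and suppose each column M_t e_i is optimal for the linear program min h_tᵀν subject to F_tᵀν = F_{t+1}ᵀe_i, G_tᵀν = G_{t+1}ᵀe_i, ν ≥ 0 (i.e., h_tᵀ(M_t e_i) ≤ h_tᵀν for every feasible ν). If 𝒟_t ⊆ 𝒟_{t+1}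 for all t = 0,…,T−2, then for every family of componentwise-nonnegative vectors μ_{t+1} ∈ ℝ^{c_{t+1}} (t = 0,…,T−2), the quantity π₇ := Σ_{t=0}^{T−2}(h_{t+1}ᵀμ_{t+1} − h_tᵀ(M_t μ_{t+1})) is nonnegative. -/
/-!
Each summand of π₇ is nonnegative. Fix a row `i` of the `(t+1)`-st system. The inclusion
`𝒟_t ⊆ 𝒟_{t+1}` says that `(x, u) ↦ F_{t+1,i} x + G_{t+1,i} u` is bounded by `h_{t+1,i}` on the
nonempty polyhedron `𝒟_t`; by LP duality (the affine Farkas lemma) this bound is certified by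
some `ν ≥ 0` with `F_tᵀν = F_{t+1}ᵀeᵢ`, `G_tᵀν = G_{t+1}ᵀeᵢ` and `h_tᵀν ≤ h_{t+1,i}`. As `ν` is
feasible for the containment LP, optimality of the column `M_t eᵢ` gives
`h_tᵀ M_t eᵢ ≤ h_{t+1,i}`, i.e. `M_tᵀh_t ≤ h_{t+1}`, and pairing with `μ_{t+1} ≥ 0` finishes.

Farkas' lemma is proved by induction on the number of generators of the cone: a new generator
`w` not separated by `y` is eliminated by projecting along `w` onto `y⊥`.
-/

open Matrix

namespace Matrix

variable {ι α : Type*} [Fintype α]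

theorem farkas_add_row [Fintype ι] (A : Matrix ι α ℝ) (w b : α → ℝ)
    (ih : ∀ (B : Matrix ι α ℝ) (b : α → ℝ),
      (∃ c, 0 ≤ c ∧ c ᵥ* B = b) ∨ ∃ y, 0 ≤ B *ᵥ y ∧ b ⬝ᵥ y < 0) :
    (∃ c, 0 ≤ c ∧ ∃ a : ℝ, 0 ≤ a ∧ c ᵥ* A + a • w = b) ∨
      ∃ y, 0 ≤ A *ᵥ y ∧ 0 ≤ w ⬝ᵥ y ∧ b ⬝ᵥ y < 0 := by
  rcases ih A b with ⟨c, hc, hcb⟩ | ⟨y, hy, hby⟩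
  · exact .inl ⟨c, hc, 0, le_rfl, by simpa using hcb⟩
  rcases le_or_gt 0 (w ⬝ᵥ y) with hwy | hwy
  · exact .inr ⟨y, hy, hwy, hby⟩
  -- Project along `w` onto `y⊥`; this kills the new row.
  set s := (w ⬝ᵥ y)⁻¹ • (A *ᵥ y) with hs
  set r := b ⬝ᵥ y / w ⬝ᵥ y with hr
  rcases ih (A - vecMulVec s w) (b - r • w) with ⟨c, hc, hcb⟩ | ⟨z, hz, hbz⟩
  · have hs_nonpos : s ≤ 0 := fun i =>
      smul_nonpos_of_nonpos_of_nonneg (inv_nonpos.2 hwy.le) (hy i)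
    refine .inl ⟨c, hc, r - c ⬝ᵥ s, ?_, ?_⟩
    · have hcs : c ⬝ᵥ s ≤ 0 := by
        simpa using dotProduct_le_dotProduct_of_nonneg_left hs_nonpos hc
      linarith [div_pos_of_neg_of_neg hby hwy]
    · rw [vecMul_sub, vecMul_vecMulVec] at hcb
      linear_combination (norm := module) hcb
  · refine .inr ⟨z - (w ⬝ᵥ z / w ⬝ᵥ y) • y, ?_, ?_, ?_⟩
    · have hproj : A *ᵥ (z - (w ⬝ᵥ z / w ⬝ᵥ y) • y) = (A - vecMulVec s w) *ᵥ z := by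
        rw [sub_mulVec, vecMulVec_mulVec, op_smul_eq_smul, hs, smul_smul, mulVec_sub,
          mulVec_smul, div_eq_mul_inv]
      rwa [hproj]
    · rw [dotProduct_sub, dotProduct_smul, smul_eq_mul, div_mul_cancel₀ _ hwy.ne, sub_self]
    · rw [sub_dotProduct, smul_dotProduct, smul_eq_mul, hr] at hbz
      rw [dotProduct_sub, dotProduct_smul, smul_eq_mul]
      linarith [show w ⬝ᵥ z / w ⬝ᵥ y * b ⬝ᵥ y = b ⬝ᵥ y / w ⬝ᵥ y * w ⬝ᵥ z by ring]

theorem farkas_fin : ∀ {m : ℕ} (A : Matrix (Fin m) α ℝ) (b : α → ℝ),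
    (∃ c, 0 ≤ c ∧ c ᵥ* A = b) ∨ ∃ y, 0 ≤ A *ᵥ y ∧ b ⬝ᵥ y < 0
  | 0, A, b => by
    by_cases hb : b = 0
    · exact .inl ⟨0, le_rfl, by simp [hb]⟩
    · refine .inr ⟨-b, fun i => i.elim0, ?_⟩
      rw [dotProduct_neg, neg_lt_zero]
      exact lt_of_le_of_ne (Finset.sum_nonneg fun i _ => mul_self_nonneg (b i))
        (Ne.symm (dotProduct_self_eq_zero.not.2 hb))
  | m + 1, A, b => by
    rcases farkas_add_row (A.submatrix Fin.castSucc id) (A (Fin.last m)) b farkas_fin with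
      ⟨c, hc, a, ha, hcb⟩ | ⟨y, hy, hwy, hby⟩
    · refine .inl ⟨Fin.snoc c a, fun i => ?_, ?_⟩
      · cases i using Fin.lastCases with
        | last => simpa using ha
        | cast i => simpa using hc i
      · rw [← hcb, vecMul_eq_sum, vecMul_eq_sum, Fin.sum_univ_castSucc]
        simp only [Fin.snoc_castSucc, Fin.snoc_last]
        rfl
    · exact .inr ⟨y, fun i => Fin.lastCases hwy (fun i => hy i) i, hby⟩

theorem farkas [Fintype ι] (A : Matrix ι α ℝ) (b : α → ℝ) :
    (∃ c, 0 ≤ c ∧ c ᵥ* A = b) ∨ ∃ y, 0 ≤ A *ᵥ y ∧ b ⬝ᵥ y < 0 := by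
  let e := Fintype.equivFin ι
  rcases farkas_fin (A.submatrix e.symm id) b with ⟨c, hc, hcb⟩ | ⟨y, hy, hby⟩
  · refine .inl ⟨c ∘ e, fun i => hc (e i), ?_⟩
    rw [← hcb, submatrix_vecMul_equiv]
    rfl
  · refine .inr ⟨y, fun i => ?_, hby⟩
    simpa using (show 0 ≤ (A *ᵥ y) (e.symm (e i)) from hy (e i))

theorem exists_mulVec_le_and_lt_dotProduct (A : Matrix ι α ℝ) (h : ι → ℝ) (w : α → ℝ) (β : ℝ)
    (hne : ∃ x, A *ᵥ x ≤ h) (z : α → ℝ) (γ : ℝ) (hγ : 0 ≤ γ)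
    (hz : ∀ i, 0 ≤ (A *ᵥ z) i + h i * γ) (hwz : w ⬝ᵥ z + β * γ < 0) :
    ∃ x, A *ᵥ x ≤ h ∧ β < w ⬝ᵥ x := by
  obtain ⟨x₀, hx₀⟩ := hne
  -- `x₀ - τ z` satisfies `A x ≤ (1 + τγ) h`, and for large `τ` its value exceeds `(1 + τγ) β`.
  obtain ⟨τ, hτ, hτwz⟩ := exists_pos_lt_mul (neg_pos.2 hwz) (β - w ⬝ᵥ x₀)
  have hscale : 0 < 1 + τ * γ := by positivity
  refine ⟨(1 + τ * γ)⁻¹ • (x₀ - τ • z), fun i => ?_, ?_⟩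
  · rw [mulVec_smul, mulVec_sub, mulVec_smul]
    simp only [Pi.smul_apply, Pi.sub_apply, smul_eq_mul]
    rw [inv_mul_le_iff₀ hscale]
    linarith [hx₀ i, mul_nonneg hτ.le (hz i)]
  · rw [dotProduct_smul, dotProduct_sub, dotProduct_smul, smul_eq_mul, smul_eq_mul,
      lt_inv_mul_iff₀ hscale]
    linarith

theorem affine_farkas [Fintype ι] (A : Matrix ι α ℝ) (h : ι → ℝ) (w : α → ℝ) (β : ℝ)
    (hne : ∃ x, A *ᵥ x ≤ h) (hle : ∀ x, A *ᵥ x ≤ h → w ⬝ᵥ x ≤ β) :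
    ∃ ν, 0 ≤ ν ∧ ν ᵥ* A = w ∧ ν ⬝ᵥ h ≤ β := by
  -- Farkas for the homogenised system: generators `(A i, h i)` and `(0, 1)`, target `(w, β)`.
  rcases farkas (fromBlocks A (replicateCol Unit h) 0 (1 : Matrix Unit Unit ℝ))
    (Sum.elim w fun _ => β) with ⟨c, hc, hcb⟩ | ⟨y, hy, hby⟩
  · rw [vecMul_fromBlocks] at hcb
    obtain ⟨hcA, hch⟩ := Sum.elim_eq_iff.mp hcb
    refine ⟨c ∘ Sum.inl, fun i => hc _, by simpa using hcA, ?_⟩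
    have hβ : c ∘ Sum.inl ⬝ᵥ h + c (Sum.inr ()) = β := by
      simpa [mulVec_replicateCol_eq_const] using congrFun hch ()
    have hc₀ : 0 ≤ c (Sum.inr ()) := hc _
    linarith
  · exfalso
    obtain ⟨z, γ, rfl⟩ : ∃ z γ, y = Sum.elim z fun _ => γ :=
      ⟨y ∘ Sum.inl, y (Sum.inr ()), by ext (_ | _) <;> rfl⟩
    have hz : ∀ i, 0 ≤ (A *ᵥ z) i + h i * γ := fun i => by
      simpa [fromBlocks_mulVec, mulVec, dotProduct] using hy (Sum.inl i)
    have hγ : 0 ≤ γ := by simpa [fromBlocks_mulVec] using hy (Sum.inr ())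
    have hwz : w ⬝ᵥ z + β * γ < 0 := by
      simpa [sumElim_dotProduct_sumElim, dotProduct] using hby
    obtain ⟨x, hx, hβx⟩ := exists_mulVec_le_and_lt_dotProduct A h w β hne z γ hγ hz hwz
    exact (hle x hx).not_gt hβx

theorem affine_farkas_fromCols {κ π : Type*} [Fintype ι] [Fintype κ] [Fintype π]
    (F : Matrix ι κ ℝ) (G : Matrix ι π ℝ) (h : ι → ℝ) (f : κ → ℝ) (g : π → ℝ) (β : ℝ)
    (hne : ∃ x u, F *ᵥ x + G *ᵥ u ≤ h)
    (hle : ∀ x u, F *ᵥ x + G *ᵥ u ≤ h → f ⬝ᵥ x + g ⬝ᵥ u ≤ β) :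
    ∃ ν, 0 ≤ ν ∧ Fᵀ *ᵥ ν = f ∧ Gᵀ *ᵥ ν = g ∧ h ⬝ᵥ ν ≤ β := by
  obtain ⟨x, u, hxu⟩ := hne
  obtain ⟨ν, hν, hνFG, hνh⟩ := affine_farkas (fromCols F G) h (Sum.elim f g) β
    ⟨Sum.elim x u, by rwa [fromCols_mulVec_sumElim]⟩
    fun y hy => by
      rw [← Sum.elim_comp_inl_inr y, fromCols_mulVec_sumElim] at hy
      rw [← Sum.elim_comp_inl_inr y, sumElim_dotProduct_sumElim]
      exact hle _ _ hy
  rw [vecMul_fromCols] at hνFG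
  obtain ⟨hνF, hνG⟩ := Sum.elim_eq_iff.mp hνFG
  exact ⟨ν, hν, by rwa [mulVec_transpose], by rwa [mulVec_transpose], by rwa [dotProduct_comm]⟩

end Matrix

theorem pi7_nonneg_general (n p T : ℕ)
    (cdim : ℕ → ℕ)
    (F : (s : ℕ) → Matrix (Fin (cdim s)) (Fin n) ℝ)
    (G : (s : ℕ) → Matrix (Fin (cdim s)) (Fin p) ℝ)
    (h : (s : ℕ) → Fin (cdim s) → ℝ)
    (hne : ∀ s < T, ∃ (x : Fin n → ℝ) (u : Fin p → ℝ),
      ∀ i, (F s *ᵥ x + G s *ᵥ u) i ≤ h s i)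
    (M : (t : ℕ) → Matrix (Fin (cdim t)) (Fin (cdim (t + 1))) ℝ)
    (hopt : ∀ t < T - 1, ∀ i : Fin (cdim (t + 1)), ∀ ν : Fin (cdim t) → ℝ,
      (∀ j, 0 ≤ ν j) →
      (F t)ᵀ *ᵥ ν = F (t + 1) i →
      (G t)ᵀ *ᵥ ν = G (t + 1) i →
      h t ⬝ᵥ (fun j => M t j i) ≤ h t ⬝ᵥ ν)
    (hsub : ∀ t < T - 1, ∀ (x : Fin n → ℝ) (u : Fin p → ℝ),
      (∀ i, (F t *ᵥ x + G t *ᵥ u) i ≤ h t i) →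
      (∀ i, (F (t + 1) *ᵥ x + G (t + 1) *ᵥ u) i ≤ h (t + 1) i))
    (μ : (t : ℕ) → Fin (cdim (t + 1)) → ℝ)
    (hμ : ∀ t < T - 1, ∀ i, 0 ≤ μ t i) :
    0 ≤ ∑ t ∈ Finset.range (T - 1), (h (t + 1) ⬝ᵥ μ t - h t ⬝ᵥ (M t *ᵥ μ t)) := by
  refine Finset.sum_nonneg fun t ht => ?_
  replace ht : t < T - 1 := Finset.mem_range.1 ht
  have hcol : h t ᵥ* M t ≤ h (t + 1) := fun i => by
    obtain ⟨ν, hν, hνF, hνG, hνh⟩ := affine_farkas_fromCols (F t) (G t) (h t)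
      (F (t + 1) i) (G (t + 1) i) (h (t + 1) i) (hne t (by omega))
      fun x u hxu => hsub t ht x u hxu i
    exact (hopt t ht i ν hν hνF hνG).trans hνh
  rw [sub_nonneg, dotProduct_mulVec]
  exact dotProduct_le_dotProduct_of_nonneg_right hcol (hμ t ht)

/-- **Nonnegativity of π₇ under constraint-set growth:** with nonempty polyhedra
`𝒟_s = {(x,u) : F_s x + G_s u ≤ h_s}`, matrices `M_t ≥ 0` with `F_tᵀ M_t = F_{t+1}ᵀ`,
`G_tᵀ M_t = G_{t+1}ᵀ` whose columns are optimal for the containment LPs, and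
`𝒟_t ⊆ 𝒟_{t+1}` for all `t = 0,…,T−2`, the quantity
`π₇ = Σ_{t=0}^{T−2}(h_{t+1}ᵀ μ_{t+1} − h_tᵀ (M_t μ_{t+1}))` is nonnegative for every
family of componentwise-nonnegative vectors `μ_{t+1}`. -/
theorem pi7_nonneg (n p T : ℕ) (hT : 2 ≤ T)
    (cdim : ℕ → ℕ)
    (F : (s : ℕ) → Matrix (Fin (cdim s)) (Fin n) ℝ)
    (G : (s : ℕ) → Matrix (Fin (cdim s)) (Fin p) ℝ)
    (h : (s : ℕ) → Fin (cdim s) → ℝ)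
    (hne : ∀ s < T, ∃ (x : Fin n → ℝ) (u : Fin p → ℝ),
      ∀ i, (F s *ᵥ x + G s *ᵥ u) i ≤ h s i)
    (M : (t : ℕ) → Matrix (Fin (cdim t)) (Fin (cdim (t + 1))) ℝ)
    (hMnn : ∀ t < T - 1, ∀ i j, 0 ≤ M t i j)
    (hMF : ∀ t < T - 1, (F t)ᵀ * M t = (F (t + 1))ᵀ)
    (hMG : ∀ t < T - 1, (G t)ᵀ * M t = (G (t + 1))ᵀ)
    (hopt : ∀ t < T - 1, ∀ i : Fin (cdim (t + 1)), ∀ ν : Fin (cdim t) → ℝ,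
      (∀ j, 0 ≤ ν j) →
      (F t)ᵀ *ᵥ ν = F (t + 1) i →
      (G t)ᵀ *ᵥ ν = G (t + 1) i →
      h t ⬝ᵥ (fun j => M t j i) ≤ h t ⬝ᵥ ν)
    (hsub : ∀ t < T - 1, ∀ (x : Fin n → ℝ) (u : Fin p → ℝ),
      (∀ i, (F t *ᵥ x + G t *ᵥ u) i ≤ h t i) →
      (∀ i, (F (t + 1) *ᵥ x + G (t + 1) *ᵥ u) i ≤ h (t + 1) i))
    (μ : (t : ℕ) → Fin (cdim (t + 1)) → ℝ)
    (hμ : ∀ t < T - 1, ∀ i, 0 ≤ μ t i) :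
    0 ≤ ∑ t ∈ Finset.range (T - 1), (h (t + 1) ⬝ᵥ μ t - h t ⬝ᵥ (M t *ᵥ μ t)) :=
  pi7_nonneg_general n p T cdim F G h hne M hopt hsub μ hμ
end

section
/- Lemma 1 for stage costs varying with the relative time (Section VII-A): let Q_t ∈ ℝ^{q_t×n} (t = 0,…,T) and R_t ∈ ℝ^{r_t×p} (t = 0,…,T−1) be time-varying weight matrices. Say that multipliers λ_t ∈ ℝ^n, ρ_t ∈ ℝ^{q_t} (t = 0,…,T) and μ_t ∈ ℝ^c, ν̲_t, ν̄_t ∈ ℝ^m, σ_t ∈ ℝ^{r_t} (t = 0,…,T−1) are dual feasible for the time-varying problem if Q_tᵀρ_t + λ_t − Aᵀλ_{t+1} + Fᵀμ_t = 0 for t = 0,…,T−1, Q_Tᵀρ_T + λ_T = 0, R_tᵀσ_t − Bᵀλ_{t+1} + Gᵀμ_t + Vᵀ(ν̄_t − ν̲_t) = 0 for t = 0,…,T−1, and μ_t, ν̲_t, ν̄_t ≥ 0 componentwise. Given such a dual-feasible tuple, suppose ρ'_t ∈ ℝ^{q_t} (t = 0,…,T−1) and σ'_t ∈ ℝ^{r_t}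 (t = 0,…,T−2) satisfy Q_tᵀρ'_t = Q_{t+1}ᵀρ_{t+1} and R_tᵀσ'_t = R_{t+1}ᵀσ_{t+1} (such solutions exist whenever the row space of Q_{t+1} is contained in that of Q_t and the row space of R_{t+1} is contained in that of R_t). Then the multipliers defined by λ'_t := λ_{t+1} for t = 0,…,T−1, λ'_T := 0, ρ'_T := 0, (μ'_t, ν̲'_t, ν̄'_t) := (μ_{t+1}, ν̲_{t+1}, ν̄_{t+1}) for t = 0,…,T−2, σ'_{T−1} := 0, and (μ'_{T−1}, ν̲'_{T−1}, ν̄'_{T−1}) := 0, together with (ρ'_t)_{t=0}^T and (σ'_t)_{t=0}^{T−1}, are dual feasible for the time-varying problem. -/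
/-! Shifting a dual-feasible tuple one step forward in time: for `t + 1 < T` each new
stationarity condition at `t` is the old one at `t + 1`, once `Q_tᵀ ρ'_t` and `R_tᵀ σ'_t` are
replaced by `Q_{t+1}ᵀ ρ_{t+1}` and `R_{t+1}ᵀ σ_{t+1}`. At `t = T - 1` the new state condition is
the old terminal condition, and the new input condition is `0 = 0` because every multiplier in
it has been set to zero. -/

open Matrix

/-- Dual feasibility for the hybrid MPC subproblem with stage costs varying with the
relative time: weight matrices `Q_t` (t = 0,…,T) and `R_t` (t = 0,…,T−1). -/
def DualFeasibleTV (n p c m T : ℕ) (qd rd : ℕ → ℕ)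
    (A : Matrix (Fin n) (Fin n) ℝ) (B : Matrix (Fin n) (Fin p) ℝ)
    (Q : (t : ℕ) → Matrix (Fin (qd t)) (Fin n) ℝ)
    (R : (t : ℕ) → Matrix (Fin (rd t)) (Fin p) ℝ)
    (F : Matrix (Fin c) (Fin n) ℝ) (G : Matrix (Fin c) (Fin p) ℝ)
    (V : Matrix (Fin m) (Fin p) ℝ)
    (lam : ℕ → Fin n → ℝ) (rho : (t : ℕ) → Fin (qd t) → ℝ)
    (mu : ℕ → Fin c → ℝ) (nlo nhi : ℕ → Fin m → ℝ)
    (sig : (t : ℕ) → Fin (rd t) → ℝ) : Prop :=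
  (∀ t < T, (Q t)ᵀ *ᵥ rho t + lam t - Aᵀ *ᵥ lam (t + 1) + Fᵀ *ᵥ mu t = 0) ∧
  (Q T)ᵀ *ᵥ rho T + lam T = 0 ∧
  (∀ t < T, (R t)ᵀ *ᵥ sig t - Bᵀ *ᵥ lam (t + 1) + Gᵀ *ᵥ mu t + Vᵀ *ᵥ (nhi t - nlo t) = 0) ∧
  (∀ t < T, ∀ i, 0 ≤ mu t i) ∧ (∀ t < T, ∀ i, 0 ≤ nlo t i) ∧ (∀ t < T, ∀ i, 0 ≤ nhi t i)

theorem shifted_nonneg {ι α : Type*} [Preorder α] [Zero α] {T : ℕ} {f : ℕ → ι → α}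
    (hf : ∀ t < T, ∀ i, 0 ≤ f t i) :
    ∀ t < T, ∀ i, 0 ≤ (if t + 1 < T then f (t + 1) else 0) i := by
  intro t _ i
  split_ifs with hnext
  · exact hf (t + 1) hnext i
  · exact le_rfl

section ShiftedMultipliers

variable {n p c m T : ℕ} {qd rd : ℕ → ℕ}
  {A : Matrix (Fin n) (Fin n) ℝ} {B : Matrix (Fin n) (Fin p) ℝ}
  {Q : (t : ℕ) → Matrix (Fin (qd t)) (Fin n) ℝ} {R : (t : ℕ) → Matrix (Fin (rd t)) (Fin p) ℝ}
  {F : Matrix (Fin c) (Fin n) ℝ} {G : Matrix (Fin c) (Fin p) ℝ} {V : Matrix (Fin m) (Fin p) ℝ}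
  {lam : ℕ → Fin n → ℝ} {rho rho' : (t : ℕ) → Fin (qd t) → ℝ} {mu : ℕ → Fin c → ℝ}
  {nlo nhi : ℕ → Fin m → ℝ} {sig sig' : (t : ℕ) → Fin (rd t) → ℝ}

theorem shifted_state_stationarity
    (hstate : ∀ t < T, (Q t)ᵀ *ᵥ rho t + lam t - Aᵀ *ᵥ lam (t + 1) + Fᵀ *ᵥ mu t = 0)
    (hterminal : (Q T)ᵀ *ᵥ rho T + lam T = 0)
    (hrho' : ∀ t < T, (Q t)ᵀ *ᵥ rho' t = (Q (t + 1))ᵀ *ᵥ rho (t + 1))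
    {t : ℕ} (ht : t < T) :
    (Q t)ᵀ *ᵥ rho' t + (if t < T then lam (t + 1) else 0)
      - Aᵀ *ᵥ (if t + 1 < T then lam (t + 1 + 1) else 0)
      + Fᵀ *ᵥ (if t + 1 < T then mu (t + 1) else 0) = 0 := by
  rw [hrho' t ht, if_pos ht]
  split_ifs with hnext
  · exact hstate (t + 1) hnext
  · obtain rfl : t + 1 = T := by omega
    simpa using hterminal

theorem shifted_input_stationarity
    (hinput : ∀ t < T,
      (R t)ᵀ *ᵥ sig t - Bᵀ *ᵥ lam (t + 1) + Gᵀ *ᵥ mu t + Vᵀ *ᵥ (nhi t - nlo t) = 0)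
    (hsig' : ∀ t < T - 1, (R t)ᵀ *ᵥ sig' t = (R (t + 1))ᵀ *ᵥ sig (t + 1))
    (hsig'last : sig' (T - 1) = 0)
    {t : ℕ} (ht : t < T) :
    (R t)ᵀ *ᵥ sig' t - Bᵀ *ᵥ (if t + 1 < T then lam (t + 1 + 1) else 0)
      + Gᵀ *ᵥ (if t + 1 < T then mu (t + 1) else 0)
      + Vᵀ *ᵥ ((if t + 1 < T then nhi (t + 1) else 0) - (if t + 1 < T then nlo (t + 1) else 0))
      = 0 := by
  split_ifs with hnext
  · rw [hsig' t (by omega)]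
    exact hinput (t + 1) hnext
  · obtain rfl : t = T - 1 := by omega
    simp [hsig'last]

end ShiftedMultipliers

theorem tv_shifted_multipliers_dual_feasible_general (n p c m T : ℕ)
    (qd rd : ℕ → ℕ)
    (A : Matrix (Fin n) (Fin n) ℝ) (B : Matrix (Fin n) (Fin p) ℝ)
    (Q : (t : ℕ) → Matrix (Fin (qd t)) (Fin n) ℝ)
    (R : (t : ℕ) → Matrix (Fin (rd t)) (Fin p) ℝ)
    (F : Matrix (Fin c) (Fin n) ℝ) (G : Matrix (Fin c) (Fin p) ℝ)
    (V : Matrix (Fin m) (Fin p) ℝ)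
    (lam : ℕ → Fin n → ℝ) (rho : (t : ℕ) → Fin (qd t) → ℝ)
    (mu : ℕ → Fin c → ℝ) (nlo nhi : ℕ → Fin m → ℝ)
    (sig : (t : ℕ) → Fin (rd t) → ℝ)
    (hdual : DualFeasibleTV n p c m T qd rd A B Q R F G V lam rho mu nlo nhi sig)
    (rho' : (t : ℕ) → Fin (qd t) → ℝ) (sig' : (t : ℕ) → Fin (rd t) → ℝ)
    (hrho' : ∀ t < T, (Q t)ᵀ *ᵥ rho' t = (Q (t + 1))ᵀ *ᵥ rho (t + 1))
    (hrho'T : rho' T = 0)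
    (hsig' : ∀ t < T - 1, (R t)ᵀ *ᵥ sig' t = (R (t + 1))ᵀ *ᵥ sig (t + 1))
    (hsig'last : sig' (T - 1) = 0) :
    DualFeasibleTV n p c m T qd rd A B Q R F G V
      (fun t => if t < T then lam (t + 1) else 0) rho'
      (fun t => if t + 1 < T then mu (t + 1) else 0)
      (fun t => if t + 1 < T then nlo (t + 1) else 0)
      (fun t => if t + 1 < T then nhi (t + 1) else 0)
      sig' := by
  obtain ⟨hstate, hterminal, hinput, hmu, hnlo, hnhi⟩ := hdual
  exact ⟨fun t ht => shifted_state_stationarity hstate hterminal hrho' ht, by simp [hrho'T],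
    fun t ht => shifted_input_stationarity hinput hsig' hsig'last ht,
    shifted_nonneg hmu, shifted_nonneg hnlo, shifted_nonneg hnhi⟩

/-- **Lemma 1 for stage costs varying with the relative time:** given a dual-feasible
tuple and vectors `ρ'_t`, `σ'_t` solving `Q_tᵀ ρ'_t = Q_{t+1}ᵀ ρ_{t+1}` (t = 0,…,T−1)
and `R_tᵀ σ'_t = R_{t+1}ᵀ σ_{t+1}` (t = 0,…,T−2), with `ρ'_T := 0` and `σ'_{T−1} := 0`,
the shifted multipliers `λ'_t := λ_{t+1}` (t = 0,…,T−1), `λ'_T := 0`,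
`(μ'_t, ν̲'_t, ν̄'_t) := (μ_{t+1}, ν̲_{t+1}, ν̄_{t+1})` (t = 0,…,T−2), and
`(μ'_{T−1}, ν̲'_{T−1}, ν̄'_{T−1}) := 0`, together with `(ρ'_t)` and `(σ'_t)`, are dual
feasible for the time-varying problem. -/
theorem tv_shifted_multipliers_dual_feasible (n p c m T : ℕ) (hT : 1 ≤ T)
    (qd rd : ℕ → ℕ)
    (A : Matrix (Fin n) (Fin n) ℝ) (B : Matrix (Fin n) (Fin p) ℝ)
    (Q : (t : ℕ) → Matrix (Fin (qd t)) (Fin n) ℝ)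
    (R : (t : ℕ) → Matrix (Fin (rd t)) (Fin p) ℝ)
    (F : Matrix (Fin c) (Fin n) ℝ) (G : Matrix (Fin c) (Fin p) ℝ)
    (V : Matrix (Fin m) (Fin p) ℝ)
    (lam : ℕ → Fin n → ℝ) (rho : (t : ℕ) → Fin (qd t) → ℝ)
    (mu : ℕ → Fin c → ℝ) (nlo nhi : ℕ → Fin m → ℝ)
    (sig : (t : ℕ) → Fin (rd t) → ℝ)
    (hdual : DualFeasibleTV n p c m T qd rd A B Q R F G V lam rho mu nlo nhi sig)
    (rho' : (t : ℕ) → Fin (qd t) → ℝ) (sig' : (t : ℕ) → Fin (rd t) → ℝ)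
    (hrho' : ∀ t < T, (Q t)ᵀ *ᵥ rho' t = (Q (t + 1))ᵀ *ᵥ rho (t + 1))
    (hrho'T : rho' T = 0)
    (hsig' : ∀ t < T - 1, (R t)ᵀ *ᵥ sig' t = (R (t + 1))ᵀ *ᵥ sig (t + 1))
    (hsig'last : sig' (T - 1) = 0) :
    DualFeasibleTV n p c m T qd rd A B Q R F G V
      (fun t => if t < T then lam (t + 1) else 0) rho'
      (fun t => if t + 1 < T then mu (t + 1) else 0)
      (fun t => if t + 1 < T then nlo (t + 1) else 0)
      (fun t => if t + 1 < T then nhi (t + 1) else 0)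
      sig' :=
  tv_shifted_multipliers_dual_feasible_general n p c m T qd rd A B Q R F G V lam rho mu nlo nhi sig
    hdual rho' sig' hrho' hrho'T hsig' hsig'last
end
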